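/- Assume the conductances are i.i.d. with continuous distribution function F varying regularly at zero with index γ > 0, and set a_n = 1/h(|B_n|). Let e₁ ∈ ℤ^d be a nearest neighbor of the origin. Then for every ζ ≥ 0: lim_{n→∞} |B_n| · ℙ[ π_0 ≤ a_n ζ and π_{e₁} ≤ a_n ζ ] = 0. -/

import Mathlib

open MeasureTheory ProbabilityTheory Filter

noncomputable section

abbrev V (d : ℕ) := Fin d → ℤ

/-- Nearest-neighbor adjacency on `ℤ^d`: `|x - y|₁ = 1`. -/
def adj {d : ℕ} (x y : V d) : Prop := (∑ i, |x i - y i|) = 1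

instance {d : ℕ} (x y : V d) : Decidable (adj x y) := by unfold adj; infer_instance

/-- The finite set of nearest neighbors of a site. -/
def nbrs {d : ℕ} (z : V d) : Finset (V d) :=
  (Finset.Icc (z - 1) (z + 1)).filter (fun y => adj z y)

/-- The local speed measure `π_z = ∑_{y ∼ z} w z y`. -/
def speed {d : ℕ} (w : V d → V d → ℝ) (z : V d) : ℝ := ∑ y ∈ nbrs z, w z y

/-- The box `B_n = [-n, n]^d ∩ ℤ^d`. -/
def box (d n : ℕ) : Finset (V d) := Finset.Icc (fun _ => -(n : ℤ)) (fun _ => (n : ℤ))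

/-- The `k`-th smallest element (1-indexed, with multiplicity) of a multiset of reals. -/
def orderStat (s : Multiset ℝ) (k : ℕ) : ℝ := (s.sort (· ≤ ·)).getD (k - 1) 0

/-- `π_{k, B_n}`, the `k`-th order statistic of `{π_z : z ∈ B_n}`. -/
def piOrd {d : ℕ} (w : V d → V d → ℝ) (n k : ℕ) : ℝ :=
  orderStat ((box d n).val.map (speed w)) k

/-- The Dirichlet matrix `-1_S L^w 1_S` on a finite set `S`. -/
def dMat {d : ℕ} (w : V d → V d → ℝ) (S : Finset (V d)) : Matrix S S ℝ :=
  fun x y => (if (x : V d) = (y : V d) then speed w (x : V d) else 0) -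
    (if adj (x : V d) (y : V d) then w (x : V d) (y : V d) else 0)

/-- The `k`-th smallest eigenvalue (1-indexed, with multiplicity) of a symmetric real
matrix (junk value `0` if the matrix is not symmetric). -/
def eigs {m : Type*} [Fintype m] [DecidableEq m] (A : Matrix m m ℝ) (k : ℕ) : ℝ :=
  if hA : A.IsHermitian then orderStat (Finset.univ.val.map hA.eigenvalues) k else 0

/-- The set `𝓑_l^{(n)} = B_n \ {z_{(1,n)}, …, z_{(l-1,n)}}`: the box with the sites
carrying the `l - 1` smallest values of `π` removed. -/
def BB {d : ℕ} (w : V d → V d → ℝ) (n l : ℕ) : Finset (V d) :=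
  (box d n).filter (fun z => piOrd w n l ≤ speed w z)

/-- `g(u) = sup {s ≥ 0 : F s = u^{-1/2}}`. -/
def gfun (F : ℝ → ℝ) (u : ℝ) : ℝ := sSup {s : ℝ | 0 ≤ s ∧ F s = u ^ (-(1/2 : ℝ))}

/-- `G` varies regularly at zero with index `γ`. -/
def RegVarZero (G : ℝ → ℝ) (γ : ℝ) : Prop :=
  ∀ b > (0:ℝ), Tendsto (fun a => G (a * b) / G a) (nhdsWithin 0 (Set.Ioi 0)) (nhds (b ^ γ))

/-- `G` varies regularly at infinity with index `ρ`. -/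
def RegVarInfty (G : ℝ → ℝ) (ρ : ℝ) : Prop :=
  ∀ l > (0:ℝ), Tendsto (fun u => G (l * u) / G u) atTop (nhds (l ^ ρ))

/-- The conductances are i.i.d., positive, symmetric, with marginal distribution
function `F`. -/
def IIDConductances {d : ℕ} {Ω : Type*} [MeasurableSpace Ω] (P : Measure Ω)
    (w : Ω → V d → V d → ℝ) (F : ℝ → ℝ) : Prop :=
  (∀ ω x y, w ω x y = w ω y x) ∧
  (∀ ω x y, adj x y → 0 < w ω x y) ∧
  (∀ x y : V d, Measurable fun ω => w ω x y) ∧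
  iIndepFun
    (fun (p : V d × Fin d) ω => w ω p.1 (p.1 + Pi.single p.2 1)) P ∧
  (∀ (x : V d) (i : Fin d) (u : ℝ),
    (P {ω | w ω x (x + Pi.single i 1) ≤ u}).toReal = F u)

/-- Assumption A with the choice of `ε₁` left existential (as used for the
almost-sure convergence statement). -/
def AssumptionA0 (F : ℝ → ℝ) (γ : ℝ) : Prop :=
  Continuous F ∧ RegVarZero F γ ∧ 0 ≤ γ ∧ γ < 1/4 ∧
  (∃ astar > (0:ℝ), ∀ a, 0 < a → a ≤ astar → ∀ b, 0 ≤ b → b ≤ 1 → b * F a ≤ F (a * b)) ∧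
  (γ = 0 → ∃ ε₁ ∈ Set.Ioo (0:ℝ) 1,
    Antitone (fun n : ℕ => (n : ℝ) ^ ((2:ℝ) + ε₁) * gfun F n) ∧
    Tendsto (fun n : ℕ => (n : ℝ) ^ ((2:ℝ) + ε₁) * gfun F n) atTop (nhds 0))

/-- Assumption A together with a fixed admissible exponent `ε₁`:
if `γ = 0` then `n^{2+ε₁} g(n)` decreases monotonically to `0`;
if `γ > 0` then `1/(2γ) > 2 + ε₁`. -/
def AssumptionAe (F : ℝ → ℝ) (γ ε₁ : ℝ) : Prop :=
  Continuous F ∧ RegVarZero F γ ∧ 0 ≤ γ ∧ γ < 1/4 ∧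
  (∃ astar > (0:ℝ), ∀ a, 0 < a → a ≤ astar → ∀ b, 0 ≤ b → b ≤ 1 → b * F a ≤ F (a * b)) ∧
  0 < ε₁ ∧ ε₁ < 1 ∧
  (γ = 0 →
    Antitone (fun n : ℕ => (n : ℝ) ^ ((2:ℝ) + ε₁) * gfun F n) ∧
    Tendsto (fun n : ℕ => (n : ℝ) ^ ((2:ℝ) + ε₁) * gfun F n) atTop (nhds 0)) ∧
  (0 < γ → 2 + ε₁ < 1 / (2 * γ))

/-- `h(u) = inf {s > 0 : 1/F_π(1/s) = u}`. -/
def hfun (Fp : ℝ → ℝ) (u : ℝ) : ℝ := sInf {s : ℝ | 0 < s ∧ 1 / Fp (1 / s) = u}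

namespace JointSpeedAux

open Finset

variable {d : ℕ}

lemma adj_add_single (z : V d) (i : Fin d) : adj z (z + Pi.single i 1) := by
  unfold adj
  rw [Finset.sum_congr rfl (fun k _ =>
    show |z k - (z + Pi.single i 1 : V d) k| = if k = i then 1 else 0 by
      by_cases h : k = i <;> simp [h, Pi.single_apply])]
  simp

lemma adj_sub_single (z : V d) (i : Fin d) : adj z (z - Pi.single i 1) := by
  unfold adj
  rw [Finset.sum_congr rfl (fun k _ =>
    show |z k - (z - Pi.single i 1 : V d) k| = if k = i then 1 else 0 by
      by_cases h : k = i <;> simp [h, Pi.single_apply])]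
  simp

lemma mem_nbrs {z y : V d} : y ∈ nbrs z ↔ adj z y := by
  unfold nbrs
  rw [Finset.mem_filter]
  constructor
  · exact fun h => h.2
  · intro h
    refine ⟨?_, h⟩
    rw [Finset.mem_Icc]
    have hb : ∀ k, |z k - y k| ≤ 1 := by
      intro k
      calc |z k - y k| ≤ ∑ j, |z j - y j| :=
            Finset.single_le_sum (f := fun j => |z j - y j|) (fun j _ => abs_nonneg _) (Finset.mem_univ k)
        _ = 1 := h
    constructor
    · intro k
      have := (abs_le.mp (hb k)).2
      simp only [Pi.sub_apply, Pi.one_apply]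
      omega
    · intro k
      have := (abs_le.mp (hb k)).1
      simp only [Pi.add_apply, Pi.one_apply]
      omega

lemma adj_cases {z y : V d} (h : adj z y) :
    ∃ i, y = z + Pi.single i 1 ∨ y = z - Pi.single i 1 := by
  unfold adj at h
  by_cases hc : ∀ k, z k - y k = 0
  · exfalso
    rw [Finset.sum_congr rfl (fun k _ => show |z k - y k| = 0 by rw [hc k]; simp)] at h
    simp at h
  push_neg at hc
  obtain ⟨i, hi⟩ := hc
  have h1 : 1 ≤ |z i - y i| := Int.one_le_abs hi
  have hsplit : |z i - y i| + ∑ k ∈ Finset.univ.erase i, |z k - y k| = 1 := by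
    rw [Finset.add_sum_erase Finset.univ (fun k => |z k - y k|) (Finset.mem_univ i)]; exact h
  have hrest0 : ∑ k ∈ Finset.univ.erase i, |z k - y k| = 0 := by
    have hnn : 0 ≤ ∑ k ∈ Finset.univ.erase i, |z k - y k| :=
      Finset.sum_nonneg fun k _ => abs_nonneg _
    omega
  have habs1 : |z i - y i| = 1 := by omega
  have hzero : ∀ k, k ≠ i → z k = y k := by
    intro k hk
    have := (Finset.sum_eq_zero_iff_of_nonneg (fun k _ => abs_nonneg (z k - y k))).mp hrest0
      k (Finset.mem_erase.mpr ⟨hk, Finset.mem_univ k⟩)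
    have := abs_eq_zero.mp this
    omega
  refine ⟨i, ?_⟩
  rcases (abs_eq (by norm_num : (0:ℤ) ≤ 1)).mp habs1 with h' | h'
  · right
    funext k
    by_cases hk : k = i
    · subst hk; simp [Pi.single_apply]; omega
    · simp [Pi.single_apply, hk]; exact (hzero k hk).symm
  · left
    funext k
    by_cases hk : k = i
    · subst hk; simp [Pi.single_apply]; omega
    · simp [Pi.single_apply, hk]; exact (hzero k hk).symm


lemma speed_pos {wo : V d → V d → ℝ} (hd0 : 0 < d)
    (hpos : ∀ x y, adj x y → 0 < wo x y) (z : V d) : 0 < speed wo z := by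
  have hmem : z + Pi.single (⟨0, hd0⟩ : Fin d) 1 ∈ nbrs z :=
    mem_nbrs.mpr (adj_add_single z ⟨0, hd0⟩)
  unfold speed
  exact Finset.sum_pos (fun y hy => hpos z y (mem_nbrs.mp hy)) ⟨_, hmem⟩

lemma single_le_speed {wo : V d → V d → ℝ} (hpos : ∀ x y, adj x y → 0 < wo x y)
    {z y : V d} (hy : y ∈ nbrs z) : wo z y ≤ speed wo z :=
  Finset.single_le_sum (f := fun y => wo z y)
    (fun y' hy' => (hpos z y' (mem_nbrs.mp hy')).le) hy

lemma nbrs_zero : nbrs (0 : V d) =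
    (Finset.univ.image fun i : Fin d => (Pi.single i 1 : V d)) ∪
    (Finset.univ.image fun i : Fin d => -(Pi.single i 1 : V d)) := by
  ext y
  simp only [mem_nbrs, Finset.mem_union, Finset.mem_image, Finset.mem_univ, true_and]
  constructor
  · intro h
    obtain ⟨i, hi | hi⟩ := adj_cases h
    · exact Or.inl ⟨i, by rw [hi, zero_add]⟩
    · exact Or.inr ⟨i, by rw [hi, zero_sub]⟩
  · rintro (⟨i, rfl⟩ | ⟨i, rfl⟩)
    · simpa using adj_add_single (0 : V d) i
    · simpa using adj_sub_single (0 : V d) i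

lemma aux_alg (A B C : ℝ) (hB : B ≠ 0) (hC : C ≠ 0) (m : ℕ) :
    (A / B) ^ (m + 1) * ((C / B) ^ m)⁻¹ * B = A ^ (m + 1) / C ^ m := by
  have hBm : B ^ m ≠ 0 := pow_ne_zero _ hB
  have hCm : C ^ m ≠ 0 := pow_ne_zero _ hC
  field_simp
  linear_combination (A * A ^ m * B⁻¹ ^ m * C ^ m) * mul_inv_cancel₀ hB

end JointSpeedAux

open JointSpeedAux

/-- `|B_n| · ℙ[π_0 ≤ a_n ζ, π_{e₁} ≤ a_n ζ] → 0` where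
`a_n = 1/h(|B_n|)` and `e₁` is a nearest neighbor of the origin. -/
theorem joint_speed_tail_limit {d : ℕ} (hd : 2 ≤ d) {Ω : Type*}
    [MeasurableSpace Ω] (P : Measure Ω) [IsProbabilityMeasure P]
    (w : Ω → V d → V d → ℝ) (F : ℝ → ℝ) (γ : ℝ)
    (hiid : IIDConductances P w F) (hF : Continuous F)
    (hreg : RegVarZero F γ) (hγ : 0 < γ)
    (e₁ : V d) (he₁ : adj 0 e₁) (ζ : ℝ) (hζ : 0 ≤ ζ) :
    Tendsto (fun n : ℕ => ((box d n).card : ℝ) *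
        (P {ω | speed (w ω) 0 ≤
            (1 / hfun (fun t => (P {ω' | speed (w ω') 0 ≤ t}).toReal)
              ((box d n).card)) * ζ ∧
          speed (w ω) e₁ ≤
            (1 / hfun (fun t => (P {ω' | speed (w ω') 0 ≤ t}).toReal)
              ((box d n).card)) * ζ}).toReal)
      atTop (nhds 0) := by
  classical
  obtain ⟨hsymm, hpos, hmeas, hind, hmarg⟩ := hiid
  have hd0 : 0 < d := by omega
  have hd0' : (0:ℝ) < d := by exact_mod_cast hd0
  have h2d : (0:ℝ) < 2 * d := by linarith
  have h4d : (0:ℝ) < 4 * d := by linarith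
  set Fp : ℝ → ℝ := fun t => (P {ω' | speed (w ω') 0 ≤ t}).toReal with hFpdef
  -- basic facts about F
  have i0 : Fin d := ⟨0, hd0⟩
  have hFeq : ∀ u, F u = (P {ω | w ω 0 ((0 : V d) + Pi.single i0 1) ≤ u}).toReal :=
    fun u => (hmarg 0 i0 u).symm
  have hFnonneg : ∀ u, 0 ≤ F u := fun u => by rw [hFeq]; exact ENNReal.toReal_nonneg
  have hFmono : Monotone F := by
    intro s t hst
    rw [hFeq, hFeq]
    exact ENNReal.toReal_mono (measure_ne_top _ _)
      (measure_mono fun ω h => le_trans h hst)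
  have hF0 : ∀ u : ℝ, u ≤ 0 → F u = 0 := by
    intro u hu
    rw [hFeq]
    have hempty : {ω | w ω 0 ((0 : V d) + Pi.single i0 1) ≤ u} = ∅ := by
      rw [Set.eq_empty_iff_forall_notMem]
      intro ω hω
      have h1 := hpos ω 0 ((0 : V d) + Pi.single i0 1) (adj_add_single 0 i0)
      simp only [Set.mem_setOf_eq] at hω
      linarith
    rw [hempty, measure_empty, ENNReal.toReal_zero]
  have hFpos : ∀ t : ℝ, 0 < t → 0 < F t := by
    intro t ht
    rcases lt_or_ge 0 (F t) with h | h
    · exact h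
    exfalso
    have hFt0 : F t = 0 := le_antisymm h (hFnonneg t)
    have h1 := hreg 1 one_pos
    have h2 : Tendsto (fun s : ℝ => F (s * 1) / F s) (nhdsWithin 0 (Set.Ioi 0)) (nhds 0) := by
      refine Filter.Tendsto.congr' ?_ tendsto_const_nhds
      filter_upwards [Ioo_mem_nhdsGT_of_mem (by constructor <;> linarith : (0:ℝ) ∈ Set.Ico 0 t)]
        with s hs
      have hFs : F s = 0 := le_antisymm ((hFmono hs.2.le).trans_eq hFt0) (hFnonneg s)
      rw [mul_one, hFs, div_zero]
    have := tendsto_nhds_unique h1 h2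
    rw [Real.one_rpow] at this
    exact one_ne_zero this
  -- the edge variables and the product formula
  have hprod : ∀ (S : Finset (V d × Fin d)) (T : ℝ),
      (P (⋂ p ∈ S, {ω | w ω p.1 (p.1 + Pi.single p.2 1) ≤ T})).toReal = F T ^ S.card := by
    intro S T
    rw [hind.meas_biInter (S := S)
      (s := fun p => {ω | w ω p.1 (p.1 + Pi.single p.2 1) ≤ T})
      (fun p _ => ⟨Set.Iic T, measurableSet_Iic, rfl⟩)]
    rw [ENNReal.toReal_prod, Finset.prod_congr rfl (fun p _ => hmarg p.1 p.2 T),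
      Finset.prod_const]
  -- the 2d edges at the origin
  set E0 : Finset (V d × Fin d) :=
    (Finset.univ.image fun i : Fin d => ((0 : V d), i)) ∪
    (Finset.univ.image fun i : Fin d => (-(Pi.single i 1 : V d), i)) with hE0
  have hinj1 : Function.Injective (fun i : Fin d => ((0 : V d), i)) := by
    intro s t hst; exact congrArg Prod.snd hst
  have hinj2 : Function.Injective (fun i : Fin d => (-(Pi.single i 1 : V d), i)) := by
    intro s t hst; exact congrArg Prod.snd hst
  have hneg_ne : ∀ i : Fin d, -(Pi.single i 1 : V d) ≠ 0 := by
    intro i h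
    have := congrFun h i
    simp at this
  have hdisj : Disjoint (Finset.univ.image fun i : Fin d => ((0 : V d), i))
      (Finset.univ.image fun i : Fin d => (-(Pi.single i 1 : V d), i)) := by
    rw [Finset.disjoint_left]
    rintro p hp1 hp2
    simp only [Finset.mem_image, Finset.mem_univ, true_and] at hp1 hp2
    obtain ⟨i, rfl⟩ := hp1
    obtain ⟨k, hk⟩ := hp2
    exact hneg_ne k (congrArg Prod.fst hk)
  have hcardE0 : E0.card = 2 * d := by
    rw [hE0, Finset.card_union_of_disjoint hdisj,
      Finset.card_image_of_injective _ hinj1, Finset.card_image_of_injective _ hinj2,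
      Finset.card_univ, Fintype.card_fin]
    ring
  -- small speed at 0 forces all 2d edges at 0 to be small
  have hwv_le0 : ∀ (ω : Ω) (T : ℝ), speed (w ω) 0 ≤ T →
      ∀ p ∈ E0, w ω p.1 (p.1 + Pi.single p.2 1) ≤ T := by
    intro ω T hT p hp
    rw [hE0, Finset.mem_union] at hp
    rcases hp with hp | hp
    · simp only [Finset.mem_image, Finset.mem_univ, true_and] at hp
      obtain ⟨i, rfl⟩ := hp
      have hmem : ((0:V d) + Pi.single i 1) ∈ nbrs (0 : V d) :=
        mem_nbrs.mpr (adj_add_single 0 i)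
      exact le_trans (single_le_speed (hpos ω) hmem) hT
    · simp only [Finset.mem_image, Finset.mem_univ, true_and] at hp
      obtain ⟨i, rfl⟩ := hp
      have hmem : (-(Pi.single i 1 : V d)) ∈ nbrs (0 : V d) := by
        apply mem_nbrs.mpr
        simpa using adj_sub_single (0 : V d) i
      have heq : w ω (-(Pi.single i 1 : V d)) ((-(Pi.single i 1 : V d)) + Pi.single i 1)
          = w ω 0 (-(Pi.single i 1 : V d)) := by
        rw [neg_add_cancel]
        exact hsymm ω _ _
      rw [heq]
      exact le_trans (single_le_speed (hpos ω) hmem) hT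
  -- the speed at 0 is the sum of the 2d edge variables
  have hinjS1 : Function.Injective (fun i : Fin d => (Pi.single i 1 : V d)) := by
    intro s t hst
    by_contra hne
    have := congrFun hst s
    simp [Pi.single_apply, hne] at this
  have hinjS2 : Function.Injective (fun i : Fin d => -(Pi.single i 1 : V d)) := by
    intro s t hst
    exact hinjS1 (neg_injective hst)
  have hdisjN : Disjoint (Finset.univ.image fun i : Fin d => (Pi.single i 1 : V d))
      (Finset.univ.image fun i : Fin d => -(Pi.single i 1 : V d)) := by
    rw [Finset.disjoint_left]
    rintro y hy1 hy2
    simp only [Finset.mem_image, Finset.mem_univ, true_and] at hy1 hy2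
    obtain ⟨i, rfl⟩ := hy1
    obtain ⟨k, hk⟩ := hy2
    have h1 := congrFun hk i
    have h2 : (Pi.single i 1 : V d) i = 1 := by simp
    have h3 : (-(Pi.single k 1 : V d)) i ≤ 0 := by
      simp only [Pi.neg_apply, Pi.single_apply]
      split <;> simp
    rw [h1] at h3
    rw [h2] at h3
    omega
  have hspeed0 : ∀ ω, speed (w ω) 0 = ∑ p ∈ E0, w ω p.1 (p.1 + Pi.single p.2 1) := by
    intro ω
    rw [hE0, Finset.sum_union hdisj, Finset.sum_image (fun s _ t _ h => hinj1 h),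
      Finset.sum_image (fun s _ t _ h => hinj2 h)]
    unfold speed
    rw [nbrs_zero, Finset.sum_union hdisjN, Finset.sum_image (fun s _ t _ h => hinjS1 h),
      Finset.sum_image (fun s _ t _ h => hinjS2 h)]
    congr 1
    · exact Finset.sum_congr rfl fun i _ => by rw [zero_add]
    · refine Finset.sum_congr rfl fun i _ => ?_
      rw [neg_add_cancel]
      exact hsymm ω _ _
  -- basic facts about Fp
  have hFp_nonneg : ∀ t, 0 ≤ Fp t := fun t => ENNReal.toReal_nonneg
  have hFp_mono : Monotone Fp := fun s t hst =>
    ENNReal.toReal_mono (measure_ne_top _ _) (measure_mono fun ω h => le_trans h hst)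
  have hB : ∀ t : ℝ, F t ^ (2*d) ≤ Fp ((2 * (d:ℝ)) * t) := by
    intro t
    have hsub : (⋂ p ∈ E0, {ω | w ω p.1 (p.1 + Pi.single p.2 1) ≤ t})
        ⊆ {ω' | speed (w ω') 0 ≤ (2 * (d:ℝ)) * t} := by
      intro ω hω
      simp only [Set.mem_iInter, Set.mem_setOf_eq] at hω
      simp only [Set.mem_setOf_eq]
      rw [hspeed0 ω]
      calc ∑ p ∈ E0, w ω p.1 (p.1 + Pi.single p.2 1) ≤ ∑ p ∈ E0, t :=
            Finset.sum_le_sum fun p hp => hω p hp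
        _ = (E0.card : ℝ) * t := by rw [Finset.sum_const, nsmul_eq_mul]
        _ = (2 * (d:ℝ)) * t := by rw [hcardE0]; push_cast; ring
    calc F t ^ (2*d) = (P (⋂ p ∈ E0, {ω | w ω p.1 (p.1 + Pi.single p.2 1) ≤ t})).toReal := by
          rw [hprod, hcardE0]
      _ ≤ Fp ((2 * (d:ℝ)) * t) :=
          ENNReal.toReal_mono (measure_ne_top _ _) (measure_mono hsub)
  have hFp_pos : ∀ t : ℝ, 0 < t → 0 < Fp t := by
    intro t ht
    have h1 := hB (t / (2 * (d:ℝ)))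
    rw [show (2 * (d:ℝ)) * (t / (2 * (d:ℝ))) = t by field_simp] at h1
    exact lt_of_lt_of_le (pow_pos (hFpos _ (by positivity)) _) h1
  -- special coordinate i₁ with e₁ i₁ = 0, and the extra edge at e₁
  obtain ⟨i₁, hi₁⟩ : ∃ i : Fin d, e₁ i = 0 := by
    by_contra hc
    push_neg at hc
    have hsum : (∑ i, |(0:V d) i - e₁ i|) = 1 := he₁
    have hge : ∀ i : Fin d, 1 ≤ |(0:V d) i - e₁ i| := by
      intro i
      have h1 : (0:V d) i - e₁ i ≠ 0 := by
        simp only [Pi.zero_apply, zero_sub, neg_ne_zero]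
        exact hc i
      exact Int.one_le_abs h1
    have hdle : (d : ℤ) * 1 ≤ ∑ i, |(0:V d) i - e₁ i| := by
      calc (d:ℤ) * 1 = ∑ _i : Fin d, 1 := by simp
        _ ≤ _ := Finset.sum_le_sum fun i _ => hge i
    rw [hsum] at hdle
    omega
  have he₁0 : e₁ ≠ 0 := by
    intro h
    have hsum : (∑ i, |(0:V d) i - e₁ i|) = 1 := he₁
    rw [h] at hsum
    simp at hsum
  have hp₁ : (e₁, i₁) ∉ E0 := by
    rw [hE0, Finset.mem_union]
    rintro (h | h) <;> simp only [Finset.mem_image, Finset.mem_univ, true_and] at h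
    · obtain ⟨i, hi⟩ := h
      exact he₁0 (congrArg Prod.fst hi).symm
    · obtain ⟨i, hi⟩ := h
      have h1 : -(Pi.single i 1 : V d) = e₁ := congrArg Prod.fst hi
      have h2 : i = i₁ := congrArg Prod.snd hi
      subst h2
      have := congrFun h1 i
      rw [hi₁] at this
      simp at this
  have hScard : (insert (e₁, i₁) E0).card = 2*d + 1 := by
    rw [Finset.card_insert_of_notMem hp₁, hcardE0]
  -- upper bound for the joint event
  have hA : ∀ T : ℝ, (P {ω | speed (w ω) 0 ≤ T ∧ speed (w ω) e₁ ≤ T}).toReal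
      ≤ F T ^ (2*d+1) := by
    intro T
    have hsub : {ω | speed (w ω) 0 ≤ T ∧ speed (w ω) e₁ ≤ T}
        ⊆ ⋂ p ∈ insert (e₁, i₁) E0, {ω | w ω p.1 (p.1 + Pi.single p.2 1) ≤ T} := by
      intro ω hω
      simp only [Set.mem_setOf_eq] at hω
      simp only [Set.mem_iInter, Set.mem_setOf_eq]
      intro p hp
      rcases Finset.mem_insert.mp hp with rfl | hp
      · have hmem : (e₁ + Pi.single i₁ 1) ∈ nbrs e₁ := mem_nbrs.mpr (adj_add_single e₁ i₁)
        exact le_trans (single_le_speed (hpos ω) hmem) hω.2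
      · exact hwv_le0 ω T hω.1 p hp
    calc (P {ω | speed (w ω) 0 ≤ T ∧ speed (w ω) e₁ ≤ T}).toReal
        ≤ (P (⋂ p ∈ insert (e₁, i₁) E0,
            {ω | w ω p.1 (p.1 + Pi.single p.2 1) ≤ T})).toReal :=
          ENNReal.toReal_mono (measure_ne_top _ _) (measure_mono hsub)
      _ = F T ^ (2*d+1) := by rw [hprod, hScard]
  -- cardinality of the box
  have hcard_box : ∀ n : ℕ, (box d n).card = (2 * n + 1) ^ d := by
    intro n
    rw [box, Pi.card_Icc]
    rw [Finset.prod_congr rfl (fun i _ =>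
      show (Finset.Icc (-(n:ℤ)) (n:ℤ)).card = 2*n+1 by rw [Int.card_Icc]; omega)]
    simp
  have hu_pos : ∀ n : ℕ, 0 < ((box d n).card : ℝ) := by
    intro n
    have h1 : 0 < (box d n).card := by rw [hcard_box]; positivity
    exact_mod_cast h1
  have hu_atTop : Tendsto (fun n : ℕ => ((box d n).card : ℝ)) atTop atTop := by
    apply tendsto_natCast_atTop_atTop.comp
    apply tendsto_atTop_mono (fun n => ?_) tendsto_id
    rw [hcard_box]
    calc n ≤ 2*n+1 := by omega
      _ ≤ (2*n+1)^d := Nat.le_self_pow (by omega) _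
  -- dispose of the case ζ = 0
  rcases hζ.eq_or_lt with hz | hz
  · have hempty : ∀ c : ℝ,
        {ω | speed (w ω) 0 ≤ c * ζ ∧ speed (w ω) e₁ ≤ c * ζ} = ∅ := by
      intro c
      rw [Set.eq_empty_iff_forall_notMem]
      rintro ω ⟨h1, _⟩
      rw [← hz, mul_zero] at h1
      exact absurd h1 (not_le.mpr (speed_pos hd0 (hpos ω) 0))
    simp only [hempty, measure_empty, ENNReal.toReal_zero, mul_zero]
    exact tendsto_const_nhds
  -- main case ζ > 0
  set a : ℕ → ℝ := fun n => 1 / hfun Fp ((box d n).card : ℝ) with hadef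
  have hh_nonneg : ∀ u : ℝ, 0 ≤ hfun Fp u := by
    intro u
    apply Real.sInf_nonneg
    intro s hs; exact hs.1.le
  have ha_nonneg : ∀ n, 0 ≤ a n := fun n => one_div_nonneg.mpr (hh_nonneg _)
  -- a n is eventually smaller than any positive δ
  have ha_small : ∀ δ : ℝ, 0 < δ → ∀ᶠ n in atTop, a n ≤ δ := by
    intro δ hδ
    have hFpδ := hFp_pos δ hδ
    filter_upwards [hu_atTop.eventually_ge_atTop (2 / Fp δ)] with n hn
    have h1 : 0 < ((box d n).card : ℝ) := hu_pos n
    have hun : 1 / ((box d n).card : ℝ) < Fp δ := by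
      have h2 : 2 ≤ ((box d n).card : ℝ) * Fp δ := by
        have := (div_le_iff₀ hFpδ).mp hn
        linarith
      rw [div_lt_iff₀ h1]
      nlinarith
    rcases Set.eq_empty_or_nonempty
      {s : ℝ | 0 < s ∧ 1 / Fp (1 / s) = ((box d n).card : ℝ)} with hS | hS
    · have hzero : hfun Fp ((box d n).card : ℝ) = 0 := by
        unfold hfun
        rw [hS]
        exact Real.sInf_empty
      show 1 / hfun Fp ((box d n).card : ℝ) ≤ δ
      rw [hzero, div_zero]
      exact hδ.le
    · have hlb : ∀ s ∈ {s : ℝ | 0 < s ∧ 1 / Fp (1 / s) = ((box d n).card : ℝ)}, 1/δ ≤ s := by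
        rintro s ⟨hs0, hseq⟩
        have hFps : Fp (1/s) = 1 / ((box d n).card : ℝ) := by
          rw [← hseq, one_div_one_div]
        have hlt : 1/s < δ := by
          by_contra hge
          push_neg at hge
          have hmono := hFp_mono hge
          rw [hFps] at hmono
          linarith
        rw [div_le_iff₀ hδ]
        have := (div_lt_iff₀ hs0).mp hlt
        nlinarith
      have hinf : 1/δ ≤ hfun Fp ((box d n).card : ℝ) := le_csInf hS hlb
      show 1 / hfun Fp ((box d n).card : ℝ) ≤ δ
      calc (1:ℝ) / hfun Fp ((box d n).card : ℝ) ≤ 1 / (1/δ) :=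
            one_div_le_one_div_of_le (by positivity) hinf
        _ = δ := one_div_one_div δ
  -- the key quantitative bound
  have key : ∀ n : ℕ, 0 < a n →
      ((box d n).card : ℝ) *
        (P {ω | speed (w ω) 0 ≤ a n * ζ ∧ speed (w ω) e₁ ≤ a n * ζ}).toReal
      ≤ F (a n * ζ) ^ (2*d+1) / F (a n * (4 * (d:ℝ))⁻¹) ^ (2*d) := by
    intro n han
    have hs₀pos : 0 < hfun Fp ((box d n).card : ℝ) := by
      by_contra hc
      push_neg at hc
      have : a n ≤ 0 := one_div_nonpos.mpr hc
      linarith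
    have hSne : {s : ℝ | 0 < s ∧ 1 / Fp (1/s) = ((box d n).card : ℝ)}.Nonempty := by
      by_contra hc
      rw [Set.not_nonempty_iff_eq_empty] at hc
      have : hfun Fp ((box d n).card : ℝ) = 0 := by
        unfold hfun; rw [hc]; exact Real.sInf_empty
      rw [this] at hs₀pos
      exact lt_irrefl _ hs₀pos
    obtain ⟨s, hsS, hslt⟩ := Real.lt_sInf_add_pos hSne hs₀pos
    have hsinf : sInf {s : ℝ | 0 < s ∧ 1 / Fp (1/s) = ((box d n).card : ℝ)}
        = hfun Fp ((box d n).card : ℝ) := rfl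
    rw [hsinf] at hslt
    have hs0 := hsS.1
    have hFps : Fp (1/s) = 1 / ((box d n).card : ℝ) := by
      rw [← hsS.2, one_div_one_div]
    have hu_eq : ((box d n).card : ℝ) = 1 / Fp (1/s) := hsS.2.symm
    have han' : a n = 1 / hfun Fp ((box d n).card : ℝ) := rfl
    have hts : a n / 2 ≤ 1/s := by
      have hlt2 : s < 2 * hfun Fp ((box d n).card : ℝ) := by linarith
      have h1s : 1/(2 * hfun Fp ((box d n).card : ℝ)) ≤ 1/s :=
        one_div_le_one_div_of_le hs0 hlt2.le
      calc a n / 2 = 1/(2 * hfun Fp ((box d n).card : ℝ)) := by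
            rw [han', div_div, mul_comm]
        _ ≤ 1/s := h1s
    have harg_pos : 0 < a n * (4 * (d:ℝ))⁻¹ := mul_pos han (inv_pos.mpr h4d)
    have hu_le : ((box d n).card : ℝ) ≤ 1 / F (a n * (4 * (d:ℝ))⁻¹) ^ (2*d) := by
      have hmono_arg : a n * (4 * (d:ℝ))⁻¹ ≤ (1/s) * (2 * (d:ℝ))⁻¹ := by
        have heq : a n * (4 * (d:ℝ))⁻¹ = (a n / 2) * (2 * (d:ℝ))⁻¹ := by
          ring
        rw [heq]
        exact mul_le_mul_of_nonneg_right hts (by positivity)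
      have hF1 : F (a n * (4 * (d:ℝ))⁻¹) ≤ F ((1/s) * (2 * (d:ℝ))⁻¹) := hFmono hmono_arg
      have hFparg : F ((1/s) * (2 * (d:ℝ))⁻¹) ^ (2*d) ≤ Fp (1/s) := by
        have hb := hB ((1/s) * (2 * (d:ℝ))⁻¹)
        rw [show (2 * (d:ℝ)) * ((1/s) * (2 * (d:ℝ))⁻¹) = 1/s by
          field_simp] at hb
        exact hb
      have hFppos' : 0 < F (a n * (4 * (d:ℝ))⁻¹) ^ (2*d) :=
        pow_pos (hFpos _ harg_pos) _
      rw [hu_eq]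
      apply one_div_le_one_div_of_le hFppos'
      exact le_trans (pow_le_pow_left₀ (hFnonneg _) hF1 _) hFparg
    have hPA := hA (a n * ζ)
    calc ((box d n).card : ℝ) *
          (P {ω | speed (w ω) 0 ≤ a n * ζ ∧ speed (w ω) e₁ ≤ a n * ζ}).toReal
        ≤ ((box d n).card : ℝ) * (F (a n * ζ) ^ (2*d+1)) :=
          mul_le_mul_of_nonneg_left hPA (hu_pos n).le
      _ ≤ (1 / F (a n * (4 * (d:ℝ))⁻¹) ^ (2*d)) * (F (a n * ζ) ^ (2*d+1)) :=
          mul_le_mul_of_nonneg_right hu_le (pow_nonneg (hFnonneg _) _)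
      _ = F (a n * ζ) ^ (2*d+1) / F (a n * (4 * (d:ℝ))⁻¹) ^ (2*d) := by
          rw [one_div, inv_mul_eq_div]
  -- the bounding expression tends to 0 along 0+
  have hElim : Tendsto (fun δ : ℝ => F (δ*ζ) ^ (2*d+1) / F (δ * (4 * (d:ℝ))⁻¹) ^ (2*d))
      (nhdsWithin 0 (Set.Ioi 0)) (nhds 0) := by
    have h1 := hreg ζ hz
    have h2 := hreg ((4 * (d:ℝ))⁻¹) (inv_pos.mpr h4d)
    have h3 : Tendsto F (nhdsWithin 0 (Set.Ioi 0)) (nhds 0) := by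
      have h4 := hF.tendsto 0
      rw [hF0 0 le_rfl] at h4
      exact h4.mono_left nhdsWithin_le_nhds
    have hc : (((4 * (d:ℝ))⁻¹ : ℝ) ^ γ) ^ (2*d) ≠ 0 :=
      ne_of_gt (pow_pos (Real.rpow_pos_of_pos (inv_pos.mpr h4d) γ) _)
    have hcomb := ((h1.pow (2*d+1)).mul ((h2.pow (2*d)).inv₀ hc)).mul h3
    rw [mul_zero] at hcomb
    refine Filter.Tendsto.congr' ?_ hcomb
    filter_upwards [self_mem_nhdsWithin] with δ hδ
    have hδ0 : (0:ℝ) < δ := hδ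
    have hFδ : F δ ≠ 0 := (hFpos δ hδ0).ne'
    have hFδ4 : F (δ * (4 * (d:ℝ))⁻¹) ≠ 0 :=
      (hFpos _ (mul_pos hδ0 (inv_pos.mpr h4d))).ne'
    exact aux_alg (F (δ*ζ)) (F δ) (F (δ * (4 * (d:ℝ))⁻¹)) hFδ hFδ4 (2*d)
  -- conclusion
  rw [Metric.tendsto_atTop]
  intro ε hε
  have hev : ∀ᶠ δ in nhdsWithin 0 (Set.Ioi 0),
      F (δ*ζ) ^ (2*d+1) / F (δ * (4 * (d:ℝ))⁻¹) ^ (2*d) < ε :=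
    hElim.eventually (gt_mem_nhds hε)
  rw [eventually_nhdsWithin_iff, Metric.eventually_nhds_iff] at hev
  obtain ⟨δ₀, hδ₀pos, hδ₀⟩ := hev
  obtain ⟨N, hN⟩ := Filter.eventually_atTop.mp (ha_small (δ₀/2) (by linarith))
  refine ⟨N, fun n hn => ?_⟩
  show dist (((box d n).card : ℝ) *
      (P {ω | speed (w ω) 0 ≤ a n * ζ ∧ speed (w ω) e₁ ≤ a n * ζ}).toReal) 0 < ε
  rw [Real.dist_eq, sub_zero, abs_of_nonneg (by positivity)]
  rcases (ha_nonneg n).eq_or_lt with h0 | h0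
  · have hempty : {ω | speed (w ω) 0 ≤ a n * ζ ∧ speed (w ω) e₁ ≤ a n * ζ} = ∅ := by
      rw [Set.eq_empty_iff_forall_notMem]
      rintro ω ⟨h1, _⟩
      rw [← h0, zero_mul] at h1
      exact absurd h1 (not_le.mpr (speed_pos hd0 (hpos ω) 0))
    rw [hempty, measure_empty, ENNReal.toReal_zero, mul_zero]
    exact hε
  · refine lt_of_le_of_lt (key n h0) (hδ₀ ?_ ?_)
    · rw [Real.dist_eq, sub_zero, abs_of_nonneg (ha_nonneg n)]
      have := hN n hn
      linarith
    · exact h0
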